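/- arXiv:math/9804079 — 5 statements merged into one kernel-verified Lean document; each statement's English description precedes it below -/
import Mathlib

section
/- Let p ≥ 2 be an integer and let W₁, …, W_p be one-variable polynomials with complex coefficients. Suppose that for every z ∈ ℂ one has (−1)^p · W₁(z) · conj(z) · (conj(z) − z)^(p−2) + Σ_{i=2}^{p} (−1)^(p−i+1) · W_i(z) · (conj(z) − z)^(p−i) · (−conj(z) − z)^(i−2) = 0. Then W_i is the zero polynomial for every i = 1, …, p. -/
open Finset

noncomputable def EfAux (p : ℕ) (W : ℕ → Polynomial ℂ) (z s : ℂ) : ℂ :=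
  (-1 : ℂ) ^ p * (W 1).eval z * ((z + s) * s ^ (p - 2)) +
    ∑ j ∈ Finset.Icc 2 p,
      (-1 : ℂ) ^ (p - j + 1) * (W j).eval z * (s ^ (p - j) * (-s - 2 * z) ^ (j - 2))

noncomputable def PzAux (p : ℕ) (W : ℕ → Polynomial ℂ) (z : ℂ) : Polynomial ℂ :=
  Polynomial.C ((-1 : ℂ) ^ p * (W 1).eval z) *
      ((Polynomial.C z + Polynomial.X) * Polynomial.X ^ (p - 2)) +
    ∑ j ∈ Finset.Icc 2 p,
      Polynomial.C ((-1 : ℂ) ^ (p - j + 1) * (W j).eval z) *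
        (Polynomial.X ^ (p - j) * (-Polynomial.X - Polynomial.C (2 * z)) ^ (j - 2))

lemma PzAux_eval (p : ℕ) (W : ℕ → Polynomial ℂ) (z s : ℂ) :
    (PzAux p W z).eval s = EfAux p W z s := by
  simp [PzAux, EfAux, Polynomial.eval_finset_sum]

lemma extAux (p : ℕ) (W : ℕ → Polynomial ℂ) (f g : Polynomial ℂ)
    (h : ∀ r : ℝ, EfAux p W (f.eval r) (g.eval r) = 0) (t : ℂ) :
    EfAux p W (f.eval t) (g.eval t) = 0 := by
  set P : Polynomial ℂ :=
    Polynomial.C ((-1 : ℂ) ^ p) * (W 1).comp f * ((f + g) * g ^ (p - 2)) +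
      ∑ j ∈ Finset.Icc 2 p,
        Polynomial.C ((-1 : ℂ) ^ (p - j + 1)) * (W j).comp f *
          (g ^ (p - j) * (-g - Polynomial.C 2 * f) ^ (j - 2)) with hPdef
  have hev : ∀ s : ℂ, P.eval s = EfAux p W (f.eval s) (g.eval s) := by
    intro s
    simp [hPdef, EfAux, Polynomial.eval_finset_sum, mul_assoc]
  have hP0 : P = 0 := by
    apply Polynomial.eq_zero_of_infinite_isRoot
    apply Set.Infinite.mono (s := Set.range (fun r : ℝ => (r : ℂ)))
    · rintro _ ⟨r, rfl⟩
      show P.IsRoot _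
      rw [Polynomial.IsRoot, hev, h r]
    · exact Set.infinite_range_of_injective Complex.ofReal_injective
  have := hev t
  rw [hP0, Polynomial.eval_zero] at this
  exact this.symm

lemma natDegree_term_le (p j : ℕ) (b z : ℂ) (hj : 2 ≤ j) (hjp : j ≤ p) :
    (Polynomial.C b *
      (Polynomial.X ^ (p - j) * (-Polynomial.X - Polynomial.C (2 * z)) ^ (j - 2))).natDegree
      ≤ p - 2 := by
  have hQ : ((-Polynomial.X - Polynomial.C (2 * z) : Polynomial ℂ) ^ (j - 2)).natDegree
      ≤ j - 2 := by
    refine le_trans (Polynomial.natDegree_pow_le) ?_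
    have h1 : (-Polynomial.X - Polynomial.C (2 * z) : Polynomial ℂ)
        = -(Polynomial.X + Polynomial.C (2 * z)) := by ring
    rw [h1, Polynomial.natDegree_neg, Polynomial.natDegree_X_add_C]
    omega
  have h1 : ((Polynomial.X : Polynomial ℂ) ^ (p - j) *
      (-Polynomial.X - Polynomial.C (2 * z)) ^ (j - 2)).natDegree ≤ (p - j) + (j - 2) :=
    le_trans Polynomial.natDegree_mul_le
      (by rw [Polynomial.natDegree_X_pow]; exact Nat.add_le_add_left hQ _)
  have h2 := Polynomial.natDegree_mul_le (p := Polynomial.C b)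
    (q := (Polynomial.X : Polynomial ℂ) ^ (p - j) *
      (-Polynomial.X - Polynomial.C (2 * z)) ^ (j - 2))
  rw [Polynomial.natDegree_C] at h2
  omega

lemma coeff_topAux (p : ℕ) (hp : 2 ≤ p) (W : ℕ → Polynomial ℂ) (z : ℂ) :
    (PzAux p W z).coeff (p - 1) = (-1 : ℂ) ^ p * (W 1).eval z := by
  rw [PzAux, Polynomial.coeff_add, Polynomial.finset_sum_coeff]
  have hT : (Polynomial.C ((-1 : ℂ) ^ p * (W 1).eval z) *
      ((Polynomial.C z + Polynomial.X) * Polynomial.X ^ (p - 2))).coeff (p - 1)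
      = (-1 : ℂ) ^ p * (W 1).eval z := by
    have hx : (Polynomial.X : Polynomial ℂ) * Polynomial.X ^ (p - 2)
        = Polynomial.X ^ (p - 1) := by
      rw [← pow_succ']
      congr 1
      omega
    rw [Polynomial.coeff_C_mul, add_mul, hx, Polynomial.coeff_add, Polynomial.coeff_C_mul,
      Polynomial.coeff_X_pow, Polynomial.coeff_X_pow, if_neg (by omega), if_pos rfl]
    ring
  rw [hT]
  have hS : ∀ j ∈ Finset.Icc 2 p,
      (Polynomial.C ((-1 : ℂ) ^ (p - j + 1) * (W j).eval z) *
        (Polynomial.X ^ (p - j) * (-Polynomial.X - Polynomial.C (2 * z)) ^ (j - 2))).coeff (p - 1)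
        = 0 := by
    intro j hj
    rw [Finset.mem_Icc] at hj
    apply Polynomial.coeff_eq_zero_of_natDegree_lt
    have := natDegree_term_le p j ((-1 : ℂ) ^ (p - j + 1) * (W j).eval z) z hj.1 hj.2
    omega
  rw [Finset.sum_eq_zero hS, add_zero]

lemma coeff_midAux (p i : ℕ) (hp : 2 ≤ p) (h2 : 2 ≤ i) (hip : i ≤ p)
    (W : ℕ → Polynomial ℂ) (z : ℂ) (hb : ∀ j, i < j → j ≤ p → W j = 0) :
    (PzAux p W z).coeff (p - i) =
      (if i = 2 then (-1 : ℂ) ^ p * (W 1).eval z * z else 0) +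
        (-1 : ℂ) ^ (p - i + 1) * (W i).eval z * (-(2 * z)) ^ (i - 2) := by
  rw [PzAux, Polynomial.coeff_add, Polynomial.finset_sum_coeff]
  congr 1
  · -- first term
    have hx : (Polynomial.X : Polynomial ℂ) * Polynomial.X ^ (p - 2)
        = Polynomial.X ^ (p - 1) := by
      rw [← pow_succ']
      congr 1
      omega
    rw [Polynomial.coeff_C_mul, add_mul, hx, Polynomial.coeff_add, Polynomial.coeff_C_mul,
      Polynomial.coeff_X_pow, Polynomial.coeff_X_pow]
    by_cases hi2 : i = 2
    · rw [if_pos (by omega : p - i = p - 2), if_neg (by omega : ¬ p - i = p - 1), if_pos hi2]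
      ring
    · rw [if_neg (by omega : ¬ p - i = p - 2), if_neg (by omega : ¬ p - i = p - 1), if_neg hi2]
      ring
  · -- sum
    rw [Finset.sum_eq_single i]
    · have hcoe : ((Polynomial.X : Polynomial ℂ) ^ (p - i) *
          (-Polynomial.X - Polynomial.C (2 * z)) ^ (i - 2)).coeff (p - i)
          = ((-Polynomial.X - Polynomial.C (2 * z) : Polynomial ℂ) ^ (i - 2)).coeff 0 := by
        have := Polynomial.coeff_X_pow_mul
          ((-Polynomial.X - Polynomial.C (2 * z) : Polynomial ℂ) ^ (i - 2)) (p - i) 0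
        rwa [zero_add] at this
      rw [Polynomial.coeff_C_mul, hcoe, Polynomial.coeff_zero_eq_eval_zero]
      simp [mul_assoc]
    · intro j hj hne
      rw [Finset.mem_Icc] at hj
      rcases lt_or_gt_of_ne hne with hlt | hgt
      · rw [Polynomial.coeff_C_mul, mul_comm ((Polynomial.X : Polynomial ℂ) ^ (p - j)),
          Polynomial.coeff_mul_X_pow', if_neg (by omega), mul_zero]
      · rw [hb j hgt hj.2]
        simp
    · intro hni
      exact absurd (Finset.mem_Icc.mpr ⟨h2, hip⟩) hni

/-- Cofactor-expansion identity from the proof of Lemma 1: if the polynomials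
`W₁, …, W_p` satisfy the stated identity in `z` and `z̄` for all `z ∈ ℂ`,
then they all vanish. -/
theorem stmt_4 (p : ℕ) (hp : 2 ≤ p) (W : ℕ → Polynomial ℂ)
    (h : ∀ z : ℂ,
      (-1 : ℂ) ^ p * (W 1).eval z * (starRingEnd ℂ) z *
          ((starRingEnd ℂ) z - z) ^ (p - 2) +
        ∑ i ∈ Finset.Icc 2 p,
          (-1 : ℂ) ^ (p - i + 1) * (W i).eval z *
            ((starRingEnd ℂ) z - z) ^ (p - i) *
            (-(starRingEnd ℂ) z - z) ^ (i - 2) = 0) :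
    ∀ i : ℕ, 1 ≤ i → i ≤ p → W i = 0 := by
  -- Step 0: the identity in terms of `EfAux` at `s = conj z - z`
  have hE0 : ∀ z : ℂ, EfAux p W z ((starRingEnd ℂ) z - z) = 0 := by
    intro z
    rw [← h z, EfAux]
    congr 1
    · ring
    · exact Finset.sum_congr rfl fun j hj => by ring
  -- Step A: extend along horizontal lines
  have hA : ∀ (x : ℝ) (t : ℂ), EfAux p W ((x : ℂ) + Complex.I * t) (-2 * (Complex.I * t)) = 0 := by
    intro x t
    have key := extAux p W (Polynomial.C (x : ℂ) + Polynomial.C Complex.I * Polynomial.X)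
      (Polynomial.C (-2 * Complex.I) * Polynomial.X) ?_ t
    · simpa [mul_assoc] using key
    · intro r
      have h2 := hE0 ((x : ℂ) + Complex.I * r)
      have e : (starRingEnd ℂ) ((x : ℂ) + Complex.I * r) - ((x : ℂ) + Complex.I * r)
          = -2 * Complex.I * r := by
        simp [map_add, map_mul, Complex.conj_ofReal, Complex.conj_I]
        ring
      rw [e] at h2
      simpa [mul_assoc] using h2
  -- Step B: extend in the real direction
  have hB : ∀ (t s : ℂ), EfAux p W (s + Complex.I * t) (-2 * (Complex.I * t)) = 0 := by
    intro t s
    have key := extAux p W (Polynomial.X + Polynomial.C (Complex.I * t))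
      (Polynomial.C (-2 * (Complex.I * t))) (fun r => by simpa using hA r t) s
    simpa using key
  -- full two-variable identity
  have hE : ∀ z s : ℂ, EfAux p W z s = 0 := by
    intro z s
    have h2 := hB (s / (-2 * Complex.I)) (z - Complex.I * (s / (-2 * Complex.I)))
    have e1 : z - Complex.I * (s / (-2 * Complex.I)) + Complex.I * (s / (-2 * Complex.I)) = z := by
      ring
    have e2 : -2 * (Complex.I * (s / (-2 * Complex.I))) = s := by
      have hne : (-2 : ℂ) * Complex.I ≠ 0 := by
        simp [Complex.I_ne_zero]
      field_simp
    rw [e1, e2] at h2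
    exact h2
  -- the polynomial in `s` vanishes identically
  have hP0 : ∀ z : ℂ, PzAux p W z = 0 := by
    intro z
    apply Polynomial.funext
    intro s
    rw [PzAux_eval, hE z s, Polynomial.eval_zero]
  -- extract W 1
  have hW1 : W 1 = 0 := by
    apply Polynomial.funext
    intro z
    have h0 : (PzAux p W z).coeff (p - 1) = 0 := by rw [hP0 z]; simp
    rw [coeff_topAux p hp W z] at h0
    have hne : ((-1 : ℂ) ^ p) ≠ 0 := pow_ne_zero _ (by norm_num)
    rw [Polynomial.eval_zero]
    exact (mul_eq_zero.mp h0).resolve_left hne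
  -- extract W i for 3 ≤ i ≤ p by downward induction
  have hWtop : ∀ i, 3 ≤ i → i ≤ p → W i = 0 := by
    have key : ∀ k i, 3 ≤ i → i ≤ p → p - i < k → W i = 0 := by
      intro k
      induction k with
      | zero => intro i _ _ hk; omega
      | succ k ih =>
        intro i h3 hip hk
        have hb : ∀ j, i < j → j ≤ p → W j = 0 := fun j hj hjp =>
          ih j (by omega) hjp (by omega)
        have hroot : ∀ z : ℂ, z ≠ 0 → (W i).eval z = 0 := by
          intro z hz
          have h0 : (PzAux p W z).coeff (p - i) = 0 := by rw [hP0 z]; simp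
          rw [coeff_midAux p i hp (by omega) hip W z hb, if_neg (by omega), zero_add] at h0
          have hne1 : ((-1 : ℂ) ^ (p - i + 1)) ≠ 0 := pow_ne_zero _ (by norm_num)
          have hne2 : ((-(2 * z)) : ℂ) ^ (i - 2) ≠ 0 :=
            pow_ne_zero _ (neg_ne_zero.mpr (mul_ne_zero two_ne_zero hz))
          rcases mul_eq_zero.mp h0 with h' | h'
          · rcases mul_eq_zero.mp h' with h'' | h''
            · exact absurd h'' hne1
            · exact h''
          · exact absurd h' hne2
        apply Polynomial.eq_zero_of_infinite_isRoot
        apply Set.Infinite.mono (s := ({0}ᶜ : Set ℂ))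
        · intro z hz
          exact hroot z (by simpa using hz)
        · exact Set.Finite.infinite_compl (Set.finite_singleton 0)
    intro i h3 hip
    exact key (p + 1) i h3 hip (by omega)
  -- extract W 2
  have hW2 : W 2 = 0 := by
    apply Polynomial.funext
    intro z
    have h0 : (PzAux p W z).coeff (p - 2) = 0 := by rw [hP0 z]; simp
    rw [coeff_midAux p 2 hp le_rfl hp W z (fun j hj hjp => hWtop j (by omega) hjp),
      if_pos rfl, hW1] at h0
    simp only [Polynomial.eval_zero, mul_zero, zero_mul, zero_add, Nat.sub_self, pow_zero,
      mul_one] at h0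
    have hne1 : ((-1 : ℂ) ^ (p - 2 + 1)) ≠ 0 := pow_ne_zero _ (by norm_num)
    rw [Polynomial.eval_zero]
    exact (mul_eq_zero.mp h0).resolve_left hne1
  intro i h1 hip
  rcases Nat.lt_or_ge i 3 with hlt | hge
  · interval_cases i
    · exact hW1
    · exact hW2
  · exact hWtop i hge hip
end

section
/- Let P be a nonzero polynomial with real coefficients, regarded as a polynomial with complex coefficients, such that P(0) = 0, let k = deg P, let r > 0 and let ζ, η ∈ ℂ. Then there exists a polynomial G with complex coefficients such that for every t ∈ ℂ with |t| = r: P(t)^k · conj(ζ + η·P(t)) = G(t). -/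
open Polynomial Finset in
/-- Main computation of Example 1: for a nonzero real polynomial `P` with
`P(0) = 0` and `k = deg P`, on the circle `{|t| = r}` the function
`P(t)^k · conj(ζ + η·P(t))` agrees with a polynomial in `t`. -/
theorem stmt_8 (P : Polynomial ℝ) (hP : P ≠ 0) (h0 : P.eval 0 = 0)
    (k : ℕ) (hk : k = P.natDegree) (r : ℝ) (hr : 0 < r) (ζ η : ℂ) :
    ∃ G : Polynomial ℂ, ∀ t : ℂ, ‖t‖ = r →
      ((P.map (algebraMap ℝ ℂ)).eval t) ^ k *
          (starRingEnd ℂ) (ζ + η * (P.map (algebraMap ℝ ℂ)).eval t)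
        = G.eval t := by
  set Pc := P.map (algebraMap ℝ ℂ) with hPcdef
  have hPc0 : Pc.coeff 0 = 0 := by
    rw [hPcdef, coeff_map, ← coeff_zero_eq_eval_zero] at *
    simp [h0]
  obtain ⟨Q, hQ⟩ := X_dvd_iff.mpr hPc0
  have hdeg : Pc.natDegree = k := by
    rw [hk, hPcdef, natDegree_map_eq_of_injective (algebraMap ℝ ℂ).injective]
  -- conjugation commutes with evaluation of real polynomials
  have hconj : ∀ z : ℂ, (starRingEnd ℂ) (Pc.eval z) = Pc.eval ((starRingEnd ℂ) z) := by
    intro z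
    rw [hPcdef, eval_map, eval_map, hom_eval₂]
    congr 1
    ext x
    simp
  refine ⟨C ((starRingEnd ℂ) ζ) * Pc ^ k +
    C ((starRingEnd ℂ) η) *
      ((∑ j ∈ Finset.range (k + 1), C (Pc.coeff j * (r : ℂ) ^ (2 * j)) * X ^ (k - j)) * Q ^ k),
    ?_⟩
  intro t ht
  have ht0 : t ≠ 0 := by
    intro h; rw [h] at ht; simp at ht; exact hr.ne ht
  have htc : t * (starRingEnd ℂ) t = (r : ℂ) ^ 2 := by
    rw [Complex.mul_conj, Complex.normSq_eq_norm_sq, ht]; push_cast; ring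
  have key : Pc.eval t ^ k * Pc.eval ((starRingEnd ℂ) t) =
      ((∑ j ∈ Finset.range (k + 1),
        C (Pc.coeff j * (r : ℂ) ^ (2 * j)) * X ^ (k - j)) * Q ^ k).eval t := by
    rw [eval_eq_sum_range' (by omega : Pc.natDegree < k + 1) ((starRingEnd ℂ) t),
      Finset.mul_sum]
    simp only [eval_mul, eval_finset_sum, eval_mul, eval_pow, eval_C, eval_X,
      Finset.sum_mul]
    refine Finset.sum_congr rfl fun j hj => ?_
    have hjk : j ≤ k := by simp at hj; omega
    have hPt : Pc.eval t = t * Q.eval t := by rw [hQ]; simp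
    have htk : t ^ k = t ^ (k - j) * t ^ j := by
      rw [← pow_add]; congr 1; omega
    calc Pc.eval t ^ k * (Pc.coeff j * (starRingEnd ℂ) t ^ j)
        = (t ^ (k - j) * (t * (starRingEnd ℂ) t) ^ j * Q.eval t ^ k) * Pc.coeff j := by
          rw [hPt, mul_pow, htk, mul_pow]; ring
      _ = Pc.coeff j * (r : ℂ) ^ (2 * j) * t ^ (k - j) * Q.eval t ^ k := by
          rw [htc, ← pow_mul]; ring
  rw [map_add, map_mul, hconj]
  simp only [eval_add, eval_mul, eval_pow, eval_C]
  rw [eval_mul, eval_pow] at key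
  rw [← key]
  ring
end

section
/- Fix an integer k ≥ 1, a real number ε, and ζ, η ∈ ℂ, and define Ψ(t) = t + ε·(t − 1)^(2k+1)·exp((t + 1)/(t − 1)) for t ∈ ℂ, t ≠ 1. Then for every t ∈ ℂ with |t| = 1 and t ≠ 1: t^(2k+1)·(Ψ(t) − t)·conj(ζ + η·Ψ(t)) = conj(ζ)·t^(2k+1)·(Ψ(t) − t) + conj(η)·( t^(2k)·(Ψ(t) − t) − ε²·(1 − t)^(4k+2) ). -/
/-- Example 2, slice computation: on the unit circle (away from `1`), with `ε` real,
`t^(2k+1)·(Ψ(t) − t)·conj(ζ + η·Ψ(t))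
  = conj(ζ)·t^(2k+1)·(Ψ(t) − t) + conj(η)·(t^(2k)·(Ψ(t) − t) − ε²·(1 − t)^(4k+2))`. -/
theorem stmt_11 (k : ℕ) (hk : 1 ≤ k) (ε : ℝ) (ζ η : ℂ) (Ψ : ℂ → ℂ)
    (hΨ : ∀ t : ℂ, t ≠ 1 →
      Ψ t = t + (ε : ℂ) * (t - 1) ^ (2 * k + 1) * Complex.exp ((t + 1) / (t - 1))) :
    ∀ t : ℂ, ‖t‖ = 1 → t ≠ 1 →
      t ^ (2 * k + 1) * (Ψ t - t) * (starRingEnd ℂ) (ζ + η * Ψ t)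
        = (starRingEnd ℂ) ζ * (t ^ (2 * k + 1) * (Ψ t - t)) +
          (starRingEnd ℂ) η *
            (t ^ (2 * k) * (Ψ t - t) - (ε : ℂ) ^ 2 * (1 - t) ^ (4 * k + 2)) := by
  intro t ht ht1
  have htm1 : t - 1 ≠ 0 := sub_ne_zero.mpr ht1
  have hcm1 : (starRingEnd ℂ) t - 1 ≠ 0 := by
    intro h
    apply htm1
    have : (starRingEnd ℂ) t = 1 := by linear_combination h
    have := congrArg (starRingEnd ℂ) this
    simp at this
    rw [this]; ring
  have htc : t * (starRingEnd ℂ) t = 1 := by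
    rw [Complex.mul_conj, Complex.normSq_eq_norm_sq, ht]; norm_num
  set E := Complex.exp ((t + 1) / (t - 1)) with hEdef
  have hw : (t + 1) / (t - 1) + ((starRingEnd ℂ) t + 1) / ((starRingEnd ℂ) t - 1) = 0 := by
    field_simp
    linear_combination 2 * htc
  have hEF : E * (starRingEnd ℂ) E = 1 := by
    rw [hEdef, ← Complex.exp_conj, ← Complex.exp_add, map_div₀, map_add, map_sub, map_one,
      hw, Complex.exp_zero]
  have hodd : (t - 1) ^ (2 * k + 1) = -((1 - t) ^ (2 * k + 1)) := by
    rw [show t - 1 = -(1 - t) by ring, Odd.neg_pow ⟨k, by ring⟩]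
  have hsq : (1 - t) ^ (4 * k + 2) = ((1 - t) ^ (2 * k + 1)) ^ 2 := by
    rw [← pow_mul]; congr 1; ring
  have h4 : t ^ (2 * k + 1) * ((starRingEnd ℂ) t - 1) ^ (2 * k + 1)
      = (1 - t) ^ (2 * k + 1) := by
    rw [← mul_pow]
    congr 1
    linear_combination htc
  rw [hΨ t ht1]
  simp only [map_add, map_mul, map_sub, map_one, map_pow, Complex.conj_ofReal]
  rw [hodd, hsq]
  linear_combination
    (-(ε : ℂ) * (1 - t) ^ (2 * k + 1) * E * t ^ (2 * k) * (starRingEnd ℂ) η) * htc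
    + (-(ε : ℂ) ^ 2 * (1 - t) ^ (2 * k + 1) * t ^ (2 * k + 1)
        * ((starRingEnd ℂ) t - 1) ^ (2 * k + 1) * (starRingEnd ℂ) η) * hEF
    + (-(ε : ℂ) ^ 2 * (1 - t) ^ (2 * k + 1) * (starRingEnd ℂ) η) * h4
end

section
/- Fix an integer k ≥ 1. For ε ∈ ℝ define Ψ_ε : ℂ → ℂ by Ψ_ε(t) = t + ε·(t − 1)^(2k+1)·exp((t + 1)/(t − 1)) for t ≠ 1 and Ψ_ε(1) = 1. Then there exists ε₀ > 0 such that for every real ε with |ε| < ε₀, the map Ψ_ε is injective on the closed unit disk {t ∈ ℂ : |t| ≤ 1}. -/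
open Complex Metric Set

noncomputable def gfun (k : ℕ) : ℂ → ℂ :=
  fun t => (t - 1) ^ (2 * k + 1) * Complex.exp ((t + 1) / (t - 1))

noncomputable def gder (k : ℕ) : ℂ → ℂ :=
  fun t => Complex.exp ((t + 1) / (t - 1)) *
    ((2 * k + 1) * (t - 1) ^ (2 * k) - 2 * (t - 1) ^ (2 * k - 1))

lemma re_nonpos {t : ℂ} (ht : ‖t‖ ≤ 1) : ((t + 1) / (t - 1)).re ≤ 0 := by
  by_cases h1 : t = 1
  · simp [h1]
  · rw [Complex.div_re]
    have hnum : (t + 1).re * (t - 1).re + (t + 1).im * (t - 1).im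
        = Complex.normSq t - 1 := by
      simp [Complex.normSq_apply]; ring
    rw [← add_div, hnum]
    have h2 : Complex.normSq t ≤ 1 := by
      have := Complex.sq_norm t
      nlinarith [norm_nonneg t]
    exact div_nonpos_of_nonpos_of_nonneg (by linarith) (Complex.normSq_nonneg _)

lemma exp_le_one {t : ℂ} (ht : ‖t‖ ≤ 1) :
    ‖(Complex.exp ((t + 1) / (t - 1)))‖ ≤ 1 := by
  rw [Complex.norm_exp]
  exact Real.exp_le_one_iff.mpr (re_nonpos ht)

lemma hasDerivAt_g (k : ℕ) (hk : 1 ≤ k) {t : ℂ} (ht : t ≠ 1) :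
    HasDerivAt (gfun k) (gder k t) t := by
  have hsub : t - 1 ≠ 0 := sub_ne_zero.mpr ht
  have hpow : HasDerivAt (fun t : ℂ => (t - 1) ^ (2 * k + 1))
      ((2 * k + 1) * (t - 1) ^ (2 * k)) t := by
    have h := ((hasDerivAt_id t).sub_const 1).pow (2 * k + 1)
    simp at h
    exact h
  have hu : HasDerivAt (fun t : ℂ => (t + 1) / (t - 1))
      (-2 / (t - 1) ^ 2) t := by
    have h := (((hasDerivAt_id t).add_const 1).div ((hasDerivAt_id t).sub_const 1) hsub)
    refine h.congr_deriv ?_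
    symm
    simp
    field_simp
    ring
  have hexp : HasDerivAt (fun t : ℂ => Complex.exp ((t + 1) / (t - 1)))
      (Complex.exp ((t + 1) / (t - 1)) * (-2 / (t - 1) ^ 2)) t :=
    (Complex.hasDerivAt_exp _).comp t hu
  have h := hpow.mul hexp
  refine h.congr_deriv ?_
  symm
  unfold gder
  obtain ⟨m, rfl⟩ : ∃ m, k = m + 1 := ⟨k - 1, by omega⟩
  have e1 : 2 * (m + 1) + 1 = 2 * m + 3 := by omega
  have e2 : 2 * (m + 1) = 2 * m + 2 := by omega
  have e3 : 2 * (m + 1) - 1 = 2 * m + 1 := by omega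
  simp only [e1, e2, e3]
  field_simp
  ring_nf
  rw [show 2 + m * 2 - 1 = m * 2 + 1 by omega]
  ring

lemma hasDerivWithinAt_g (k : ℕ) (hk : 1 ≤ k) {t : ℂ}
    (ht : t ∈ closedBall (0 : ℂ) 1) :
    HasDerivWithinAt (gfun k) (gder k t) (closedBall (0 : ℂ) 1) t := by
  by_cases h1 : t = 1
  · subst h1
    have hg0 : gder k 1 = 0 := by
      have h2 : 2 * k ≠ 0 := by omega
      have h3 : 2 * k - 1 ≠ 0 := by omega
      simp [gder, zero_pow h2, zero_pow h3]
    rw [hg0]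
    rw [hasDerivWithinAt_iff_tendsto_slope]
    have hb : ∀ s ∈ closedBall (0 : ℂ) 1 \ {1},
        ‖slope (gfun k) 1 s‖ ≤ ‖s - 1‖ ^ (2 * k) := by
      intro s hs
      have hs1 : s ≠ 1 := hs.2
      have hsub : s - 1 ≠ 0 := sub_ne_zero.mpr hs1
      have habs : ‖s‖ ≤ 1 := by
        simpa [Complex.dist_eq] using mem_closedBall.mp hs.1
      have : slope (gfun k) 1 s = (s - 1) ^ (2 * k) * Complex.exp ((s + 1) / (s - 1)) := by
        rw [slope_def_field]
        unfold gfun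
        have : (1 - 1 : ℂ) ^ (2 * k + 1) * Complex.exp ((1 + 1) / (1 - 1)) = 0 := by simp
        rw [this, sub_zero]
        rw [div_eq_iff hsub]
        ring
      rw [this]
      calc ‖(s - 1) ^ (2 * k) * Complex.exp ((s + 1) / (s - 1))‖
          = ‖s - 1‖ ^ (2 * k) * ‖(Complex.exp ((s + 1) / (s - 1)))‖ := by
            simp [norm_mul, norm_pow]
        _ ≤ ‖s - 1‖ ^ (2 * k) * 1 :=
            mul_le_mul_of_nonneg_left (exp_le_one habs) (by positivity)
        _ = ‖s - 1‖ ^ (2 * k) := by ring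
    apply squeeze_zero_norm' (eventually_nhdsWithin_of_forall hb)
    have : Filter.Tendsto (fun s : ℂ => ‖s - 1‖ ^ (2 * k))
        (nhds 1) (nhds 0) := by
      have h0 : ‖(1 : ℂ) - 1‖ ^ (2 * k) = 0 := by
        simp; omega
      rw [← h0]
      exact ((continuous_norm.comp (continuous_id.sub continuous_const)).pow
        (2 * k)).tendsto 1
    exact this.mono_left nhdsWithin_le_nhds
  · exact (hasDerivAt_g k hk h1).hasDerivWithinAt

lemma gder_bound (k : ℕ) (hk : 1 ≤ k) {t : ℂ} (ht : t ∈ closedBall (0 : ℂ) 1) :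
    ‖gder k t‖ ≤ (2 * k + 2) * 2 ^ (2 * k) := by
  have habs : ‖t‖ ≤ 1 := by
    simpa [Complex.dist_eq] using mem_closedBall.mp ht
  have hA : ‖t - 1‖ ≤ 2 := by
    calc ‖t - 1‖ ≤ ‖t‖ + ‖(1 : ℂ)‖ := norm_sub_le t 1
      _ ≤ 2 := by simp; linarith
  have b1 : ‖(t - 1) ^ (2 * k)‖ ≤ 2 ^ (2 * k) := by
    rw [norm_pow]; exact pow_le_pow_left₀ (norm_nonneg _) hA _
  have b2 : ‖(t - 1) ^ (2 * k - 1)‖ ≤ 2 ^ (2 * k - 1) := by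
    rw [norm_pow]; exact pow_le_pow_left₀ (norm_nonneg _) hA _
  have hcoef : ‖(2 * (k : ℂ) + 1)‖ = (2 * k + 1 : ℝ) := by
    have : (2 * (k : ℂ) + 1) = ((2 * k + 1 : ℕ) : ℂ) := by push_cast; ring
    rw [this, Complex.norm_natCast]; push_cast; ring
  have hexp1 : ‖Complex.exp ((t + 1) / (t - 1))‖ ≤ 1 := by
    exact exp_le_one habs
  have step : ‖gder k t‖ ≤ 1 * ((2 * k + 1) * 2 ^ (2 * k) + 2 * 2 ^ (2 * k - 1)) := by
    unfold gder
    rw [norm_mul]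
    apply mul_le_mul hexp1 _ (norm_nonneg _) zero_le_one
    refine (norm_sub_le _ _).trans ?_
    rw [norm_mul, norm_mul, hcoef]
    have h2n : ‖(2 : ℂ)‖ = (2 : ℝ) := by simp
    rw [h2n]
    exact add_le_add (mul_le_mul_of_nonneg_left b1 (by positivity))
      (mul_le_mul_of_nonneg_left b2 (by norm_num))
  refine step.trans (le_of_eq ?_)
  have h4 : (2 : ℝ) * 2 ^ (2 * k - 1) = 2 ^ (2 * k) := by
    rw [← pow_succ']
    congr 1
    omega
  rw [h4]
  ring

/-- Example 2: for `k ≥ 1`, the maps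
`Ψ_ε(t) = t + ε·(t − 1)^(2k+1)·exp((t + 1)/(t − 1))` (with `Ψ_ε(1) = 1`)
are injective on the closed unit disk for all real `ε` small enough. -/
theorem stmt_12 (k : ℕ) (hk : 1 ≤ k) (Ψ : ℝ → ℂ → ℂ)
    (hΨ : ∀ (ε : ℝ) (t : ℂ), t ≠ 1 →
      Ψ ε t = t + (ε : ℂ) * (t - 1) ^ (2 * k + 1) * Complex.exp ((t + 1) / (t - 1)))
    (hΨ1 : ∀ ε : ℝ, Ψ ε 1 = 1) :
    ∃ ε₀ > (0 : ℝ), ∀ ε : ℝ, |ε| < ε₀ →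
      Set.InjOn (Ψ ε) {t : ℂ | ‖t‖ ≤ 1} := by
  set C : ℝ := (2 * k + 2) * 2 ^ (2 * k) with hC
  have hC0 : 0 ≤ C := by positivity
  have hlip : ∀ a ∈ closedBall (0:ℂ) 1, ∀ b ∈ closedBall (0:ℂ) 1,
      ‖gfun k a - gfun k b‖ ≤ C * ‖a - b‖ := by
    intro a ha b hb
    exact (convex_closedBall (0:ℂ) 1).norm_image_sub_le_of_norm_hasDerivWithin_le
      (fun x hx => hasDerivWithinAt_g k hk hx)
      (fun x hx => gder_bound k hk hx) hb ha
  refine ⟨1 / (C + 1), by positivity, fun ε hε a ha b hb hab => ?_⟩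
  have hmem : ∀ t : ℂ, t ∈ {t : ℂ | ‖t‖ ≤ 1} → t ∈ closedBall (0:ℂ) 1 := by
    intro t ht
    simpa [Complex.dist_eq] using ht
  have hform : ∀ t : ℂ, Ψ ε t = t + (ε : ℂ) * gfun k t := by
    intro t
    by_cases h1 : t = 1
    · subst h1
      simp [hΨ1, gfun]
    · rw [hΨ ε t h1]; unfold gfun; ring
  rw [hform a, hform b] at hab
  have key : a - b = (ε : ℂ) * (gfun k b - gfun k a) := by
    have := hab
    ring_nf at this ⊢
    linear_combination this
  by_contra hne
  have hd : (0:ℝ) < ‖a - b‖ := by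
    rw [norm_pos_iff]
    exact sub_ne_zero.mpr hne
  have h1 : ‖a - b‖ ≤ |ε| * (C * ‖b - a‖) := by
    rw [key, norm_mul]
    simp only [Complex.norm_real, Real.norm_eq_abs]
    exact mul_le_mul_of_nonneg_left (hlip b (hmem b hb) a (hmem a ha)) (abs_nonneg ε)
  rw [norm_sub_rev b a] at h1
  have h2 : |ε| * (C * ‖a - b‖) < ‖a - b‖ := by
    have : |ε| * (C + 1) < 1 := by
      rw [lt_div_iff₀ (by positivity : (0:ℝ) < C + 1)] at hε
      linarith [hε]
    nlinarith [abs_nonneg ε, hd]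
  linarith
end

section
/- Let a, b, c ∈ ℂ and let z = (z₁, z₂, z₃) ∈ ℂ³ satisfy Im z₂ = 0, Im z₃ = 0, |z₁|² + (Re z₂)² + (Re z₃)² = 1, and z₁ = a·z₂ + b·z₃ + c. Then (Re(a)·z₂ + Re(b)·z₃ + Re(c))² + (Im(a)·z₂ + Im(b)·z₃ + Im(c))² + z₂² + z₃² = 1, where Re(a), Im(a), etc. are regarded as complex numbers. In other words, the intersection Γ ∩ H_{a,b,c} of the sphere Γ = {y₂ = y₃ = 0, x₁² + y₁² + x₂² + x₃² = 1} ⊂ ℂ³ (with z_j = x_j + i·y_j) with the hyperplane H_{a,b,c} = {z₁ = a·z₂ + b·z₃ + c} is contained in the algebraic surface S_{a,b,c} = {(a₁z₂ + b₁z₃ + c₁)² + (a₂z₂ + b₂z₃ + c₂)² + z₂² + z₃² = 1} ∩ H_{a,b,c}, where a = a₁ + i·a₂, b = b₁ + i·b₂, c = c₁ + i·c₂. -/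
/-- Henkin's Example 4: a point of the 3-sphere
`Γ = {y₂ = y₃ = 0, x₁² + y₁² + x₂² + x₃² = 1} ⊂ ℂ³` lying on the hyperplane
`H_{a,b,c} = {z₁ = a·z₂ + b·z₃ + c}` lies on the algebraic surface
`(a₁z₂ + b₁z₃ + c₁)² + (a₂z₂ + b₂z₃ + c₂)² + z₂² + z₃² = 1`. -/
theorem stmt_16 (a b c z₁ z₂ z₃ : ℂ)
    (hy₂ : z₂.im = 0) (hy₃ : z₃.im = 0)
    (hsph : ‖z₁‖ ^ 2 + z₂.re ^ 2 + z₃.re ^ 2 = 1)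
    (hpl : z₁ = a * z₂ + b * z₃ + c) :
    ((a.re : ℂ) * z₂ + (b.re : ℂ) * z₃ + (c.re : ℂ)) ^ 2 +
      ((a.im : ℂ) * z₂ + (b.im : ℂ) * z₃ + (c.im : ℂ)) ^ 2 +
      z₂ ^ 2 + z₃ ^ 2 = 1 := by
  have h2 : z₂ = (z₂.re : ℂ) := by
    apply Complex.ext <;> simp [hy₂]
  have h3 : z₃ = (z₃.re : ℂ) := by
    apply Complex.ext <;> simp [hy₃]
  have habs : ‖z₁‖ ^ 2 = z₁.re ^ 2 + z₁.im ^ 2 := by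
    rw [Complex.sq_norm, Complex.normSq_apply]; ring
  have hre : z₁.re = a.re * z₂.re + b.re * z₃.re + c.re := by
    rw [hpl]; simp [hy₂, hy₃]
  have him : z₁.im = a.im * z₂.re + b.im * z₃.re + c.im := by
    rw [hpl]; simp [hy₂, hy₃]
  rw [habs, hre, him] at hsph
  rw [h2, h3]
  have : ((a.re * z₂.re + b.re * z₃.re + c.re) ^ 2 +
      (a.im * z₂.re + b.im * z₃.re + c.im) ^ 2 +
      z₂.re ^ 2 + z₃.re ^ 2 : ℝ) = 1 := by nlinarith [hsph]
  calc ((a.re : ℂ) * (z₂.re:ℂ) + (b.re : ℂ) * (z₃.re:ℂ) + (c.re : ℂ)) ^ 2 +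
      ((a.im : ℂ) * (z₂.re:ℂ) + (b.im : ℂ) * (z₃.re:ℂ) + (c.im : ℂ)) ^ 2 +
      (z₂.re:ℂ) ^ 2 + (z₃.re:ℂ) ^ 2
      = ((((a.re * z₂.re + b.re * z₃.re + c.re) ^ 2 +
      (a.im * z₂.re + b.im * z₃.re + c.im) ^ 2 +
      z₂.re ^ 2 + z₃.re ^ 2 : ℝ)) : ℂ) := by push_cast; ring
    _ = 1 := by rw [this]; norm_num
end
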